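/- Let (X, δ) be a hyperconvex diversity with induced metric d, and let Z ⊆ X be nonempty and bounded with respect to d. Let r assign to each finite subset of Z a real number, with r(∅) = 0, satisfying δ(⋃_{A∈𝒜} A) ≤ Σ_{A∈𝒜} r(A) for every finite collection 𝒜 of finite subsets of Z. Define Y = { x ∈ X : δ(A ∪ {x}) ≤ r(A) for every finite A ⊆ Z }. Then Y is nonempty and the restricted diversity (Y, δ) is a hyperconvex diversity. -/

import Mathlib

/-- A diversity on `X`. -/
structure Diversity (X : Type*) [DecidableEq X] where
  delta : Finset X → ℝ
  nonneg : ∀ A, 0 ≤ delta A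
  eq_zero_iff : ∀ A, delta A = 0 ↔ A.card ≤ 1
  triangle : ∀ A B C : Finset X, B.Nonempty →
    delta (A ∪ C) ≤ delta (A ∪ B) + delta (B ∪ C)

namespace Diversity

variable {X : Type*} [DecidableEq X]

/-- Hyperconvexity of a diversity. -/
def Hyperconvex (D : Diversity X) : Prop :=
  ∀ r : Finset X → ℝ, r ∅ = 0 →
    (∀ 𝒜 : Finset (Finset X), D.delta (𝒜.sup id) ≤ ∑ A ∈ 𝒜, r A) →
    ∃ z : X, ∀ Y : Finset X, D.delta (insert z Y) ≤ r Y

/-- A diversity is bounded if its values are uniformly bounded above. -/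
def Bounded (D : Diversity X) : Prop :=
  ∃ M : ℝ, 0 ≤ M ∧ ∀ A : Finset X, D.delta A ≤ M

/-- The restriction of a diversity to a subset `H ⊆ X`. -/
def restrict (D : Diversity X) (H : Set X) : Diversity H where
  delta A := D.delta (A.image Subtype.val)
  nonneg A := D.nonneg _
  eq_zero_iff A := by
    rw [D.eq_zero_iff, Finset.card_image_of_injective A Subtype.val_injective]
  triangle A B C hB := by
    have h := D.triangle (A.image Subtype.val) (B.image Subtype.val) (C.image Subtype.val)
      (hB.image _)
    simpa [Finset.image_union] using h

end Diversity

/-! In a hyperconvex diversity, a function `r` that is admissible only for families drawn from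
some collection `𝒮 ∋ ∅, {z₀}` of finite sets already has a centre: extended outside `𝒮` by
`A ↦ δ(A ∪ {z₀}) + r {z₀}` it becomes admissible for all families, since the extra `r {z₀}`
pays for joining the `𝒮`-part of a family to `z₀`. For `𝒮` the finite subsets of `Z` this
gives a point of `Y`. For hyperconvexity of `Y`, glue an admissible `s` on `Y` with `r` by
taking on each set the smaller of the values available. Every point of `Y` is a centre of `r`,
so a triangle inequality through a point of the `Y`-part of a family splits it into a part
controlled by `r` and one controlled by `s`. Hence the glued function is admissible, and a centre
of it lies in `Y` and is a centre of `s`. -/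

theorem Finset.sup_filter_sup_sup_filter_not {α β : Type*} [SemilatticeSup α] [OrderBot α]
    [DecidableEq β] (s : Finset β) (f : β → α) (p : β → Prop) [DecidablePred p] :
    (s.filter p).sup f ⊔ (s.filter (¬ p ·)).sup f = s.sup f := by
  rw [← Finset.sup_union, Finset.filter_union_filter_not_eq]

namespace Diversity

section Glue

variable {X : Type*} {Z Y : Set X} {r s : Finset X → ℝ}

-- Only the values on sets contained in `Z` or in `Y` matter; elsewhere `s C` is a filler.
open Classical in
noncomputable def glue (Z Y : Set X) (r s : Finset X → ℝ) (C : Finset X) : ℝ :=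
  if (C : Set X) ⊆ Z then (if (C : Set X) ⊆ Y then min (r C) (s C) else r C) else s C

lemma glue_le_left {C : Finset X} (hC : (C : Set X) ⊆ Z) : glue Z Y r s C ≤ r C := by
  unfold glue; split_ifs <;> simp

lemma glue_le_right {C : Finset X} (hC : (C : Set X) ⊆ Y) : glue Z Y r s C ≤ s C := by
  unfold glue; split_ifs <;> simp

lemma le_glue {C : Finset X} (hC : (C : Set X) ⊆ Z ∨ (C : Set X) ⊆ Y) :
    ((C : Set X) ⊆ Z ∧ r C ≤ glue Z Y r s C) ∨ ((C : Set X) ⊆ Y ∧ s C ≤ glue Z Y r s C) := by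
  unfold glue
  split_ifs with hZ hY
  · rcases le_total (r C) (s C) with h | h
    · exact Or.inl ⟨hZ, by simp [h]⟩
    · exact Or.inr ⟨hY, by simp [h]⟩
  · exact Or.inl ⟨hZ, le_rfl⟩
  · exact Or.inr ⟨hC.resolve_left hZ, le_rfl⟩

lemma glue_empty (hr0 : r ∅ = 0) (hs0 : s ∅ = 0) : glue Z Y r s ∅ = 0 := by
  simp [glue, hr0, hs0]

end Glue

variable {X : Type*} [DecidableEq X] (D : Diversity X)

def IsAdmissibleOn (𝒮 : Set (Finset X)) (r : Finset X → ℝ) : Prop :=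
  ∀ 𝒜 : Finset (Finset X), (∀ A ∈ 𝒜, A ∈ 𝒮) → D.delta (𝒜.sup id) ≤ ∑ A ∈ 𝒜, r A

def IsCenterOn (𝒮 : Set (Finset X)) (r : Finset X → ℝ) (z : X) : Prop :=
  ∀ A ∈ 𝒮, D.delta (insert z A) ≤ r A

lemma delta_singleton (x : X) : D.delta {x} = 0 := (D.eq_zero_iff {x}).mpr (by simp)

lemma delta_union_le (y : X) (P Q : Finset X) :
    D.delta (P ∪ Q) ≤ D.delta (insert y P) + D.delta (insert y Q) := by
  have h := D.triangle P {y} Q (Finset.singleton_nonempty y)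
  rwa [Finset.union_comm P {y}, ← Finset.insert_eq, ← Finset.insert_eq] at h

lemma delta_insert_union_le (y : X) (P Q : Finset X) :
    D.delta (insert y (P ∪ Q)) ≤ D.delta (insert y P) + D.delta (insert y Q) := by
  simpa [← Finset.insert_union_distrib] using D.delta_union_le y (insert y P) (insert y Q)

lemma delta_insert_sup_le {ι : Type*} (y : X) (𝒞 : Finset ι) (f : ι → Finset X) :
    D.delta (insert y (𝒞.sup f)) ≤ ∑ C ∈ 𝒞, D.delta (insert y (f C)) := by
  classical
  induction 𝒞 using Finset.induction_on with
  | empty => simp [D.delta_singleton]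
  | insert a 𝒞 ha ih =>
    rw [Finset.sup_insert, Finset.sum_insert ha]
    exact (D.delta_insert_union_le y _ _).trans (by gcongr)

variable {D}

lemma IsAdmissibleOn.nonneg {𝒮 : Set (Finset X)} {r : Finset X → ℝ} (hr : D.IsAdmissibleOn 𝒮 r)
    {A : Finset X} (hA : A ∈ 𝒮) : 0 ≤ r A := by
  have h := hr {A} (by simpa using hA)
  rw [Finset.sup_singleton, Finset.sum_singleton] at h
  exact (D.nonneg A).trans h

theorem Hyperconvex.exists_isCenterOn (hD : D.Hyperconvex) {𝒮 : Set (Finset X)}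
    {r : Finset X → ℝ} (h𝒮 : ∅ ∈ 𝒮) (hr0 : r ∅ = 0) {z₀ : X} (hz₀ : {z₀} ∈ 𝒮)
    (hr : D.IsAdmissibleOn 𝒮 r) : ∃ z, D.IsCenterOn 𝒮 r z := by
  classical
  let r' A := if A ∈ 𝒮 then r A else D.delta (insert z₀ A) + r {z₀}
  suffices ∀ 𝒜 : Finset (Finset X), D.delta (𝒜.sup id) ≤ ∑ A ∈ 𝒜, r' A by
    obtain ⟨z, hz⟩ := hD r' (by simp [r', h𝒮, hr0]) this
    exact ⟨z, fun A hA => by simpa [r', hA] using hz A⟩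
  intro 𝒜
  set ℐ := 𝒜.filter (· ∈ 𝒮)
  set 𝒪 := 𝒜.filter (· ∉ 𝒮)
  have hsum : ∑ A ∈ 𝒜, r' A = ∑ A ∈ ℐ, r A + ∑ A ∈ 𝒪, (D.delta (insert z₀ A) + r {z₀}) := by
    rw [← Finset.sum_filter_add_sum_filter_not 𝒜 (· ∈ 𝒮)]
    congr 1 <;> refine Finset.sum_congr rfl fun A hA => ?_ <;>
      simp only [r', (Finset.mem_filter.mp hA).2, if_true, if_false]
  rcases 𝒪.eq_empty_or_nonempty with h𝒪 | ⟨A₀, hA₀⟩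
  · have hall : ∀ A ∈ 𝒜, A ∈ 𝒮 := fun A hA => by
      by_contra h
      exact Finset.filter_eq_empty_iff.mp h𝒪 hA h
    have hℐ : ℐ = 𝒜 := Finset.filter_true_of_mem hall
    rw [hsum, h𝒪, Finset.sum_empty, add_zero, hℐ]
    exact hr 𝒜 hall
  have hinner : D.delta (insert z₀ (ℐ.sup id)) ≤ r {z₀} + ∑ A ∈ ℐ, r A := by
    have h := hr (insert {z₀} ℐ)
      (Finset.forall_mem_insert .. |>.mpr ⟨hz₀, fun A hA => (Finset.mem_filter.mp hA).2⟩)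
    rw [Finset.sup_insert, id, Finset.sup_eq_union, ← Finset.insert_eq] at h
    refine h.trans ?_
    by_cases hmem : {z₀} ∈ ℐ
    · rw [Finset.insert_eq_of_mem hmem]; linarith [hr.nonneg hz₀]
    · rw [Finset.sum_insert hmem]
  have hcount : r {z₀} ≤ ∑ A ∈ 𝒪, r {z₀} :=
    Finset.single_le_sum (f := fun _ => r {z₀}) (fun _ _ => hr.nonneg hz₀) hA₀
  calc D.delta (𝒜.sup id)
      ≤ D.delta (insert z₀ (ℐ.sup id)) + D.delta (insert z₀ (𝒪.sup id)) := by
        rw [← Finset.sup_filter_sup_sup_filter_not 𝒜 id (· ∈ 𝒮)]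
        exact D.delta_union_le z₀ _ _
    _ ≤ (r {z₀} + ∑ A ∈ ℐ, r A) + ∑ A ∈ 𝒪, D.delta (insert z₀ A) :=
        add_le_add hinner (D.delta_insert_sup_le z₀ 𝒪 id)
    _ ≤ ∑ A ∈ 𝒜, r' A := by
        rw [hsum, Finset.sum_add_distrib]; linarith

section GlueAdmissible

variable {Z Y : Set X} {r s : Finset X → ℝ}

lemma delta_sup_union_sup_le (hr : D.IsAdmissibleOn {A | (A : Set X) ⊆ Z} r)
    (hs : D.IsAdmissibleOn {A | (A : Set X) ⊆ Y} s)
    (hY : ∀ y ∈ Y, D.IsCenterOn {A | (A : Set X) ⊆ Z} r y) {ℛ 𝒮 : Finset (Finset X)}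
    (hℛ : ∀ C ∈ ℛ, (C : Set X) ⊆ Z) (h𝒮 : ∀ C ∈ 𝒮, (C : Set X) ⊆ Y) :
    D.delta (ℛ.sup id ∪ 𝒮.sup id) ≤ ∑ C ∈ ℛ, r C + ∑ C ∈ 𝒮, s C := by
  rcases (𝒮.sup id).eq_empty_or_nonempty with h | ⟨y, hy⟩
  · rw [h, Finset.union_empty]
    linarith [hr ℛ hℛ, Finset.sum_nonneg fun C hC => hs.nonneg (h𝒮 C hC)]
  obtain ⟨C, hC, hyC⟩ := Finset.mem_sup.mp hy
  have hyY : y ∈ Y := h𝒮 C hC hyC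
  calc D.delta (ℛ.sup id ∪ 𝒮.sup id)
      ≤ D.delta (insert y (ℛ.sup id)) + D.delta (𝒮.sup id) := by
        simpa [Finset.insert_eq_of_mem hy] using D.delta_union_le y (ℛ.sup id) (𝒮.sup id)
    _ ≤ ∑ C ∈ ℛ, D.delta (insert y C) + ∑ C ∈ 𝒮, s C :=
        add_le_add (D.delta_insert_sup_le y ℛ id) (hs 𝒮 h𝒮)
    _ ≤ ∑ C ∈ ℛ, r C + ∑ C ∈ 𝒮, s C := by
        gcongr with C hC
        exact hY y hyY C (hℛ C hC)

lemma isAdmissibleOn_glue (hr : D.IsAdmissibleOn {A | (A : Set X) ⊆ Z} r)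
    (hs : D.IsAdmissibleOn {A | (A : Set X) ⊆ Y} s)
    (hY : ∀ y ∈ Y, D.IsCenterOn {A | (A : Set X) ⊆ Z} r y) :
    D.IsAdmissibleOn {C | (C : Set X) ⊆ Z ∨ (C : Set X) ⊆ Y} (glue Z Y r s) := by
  classical
  intro 𝒞 h𝒞
  let p (C : Finset X) : Prop := (C : Set X) ⊆ Z ∧ r C ≤ glue Z Y r s C
  have hnp : ∀ C ∈ 𝒞.filter (¬ p ·), (C : Set X) ⊆ Y ∧ s C ≤ glue Z Y r s C := fun C hC => by
    obtain ⟨hC, hnC⟩ := Finset.mem_filter.mp hC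
    exact (le_glue (h𝒞 C hC)).resolve_left hnC
  rw [← Finset.sup_filter_sup_sup_filter_not 𝒞 id p, ← Finset.sum_filter_add_sum_filter_not 𝒞 p]
  refine (delta_sup_union_sup_le hr hs hY (fun C hC => (Finset.mem_filter.mp hC).2.1)
    fun C hC => (hnp C hC).1).trans (add_le_add ?_ ?_)
  · exact Finset.sum_le_sum fun C hC => (Finset.mem_filter.mp hC).2.2
  · exact Finset.sum_le_sum fun C hC => (hnp C hC).2

end GlueAdmissible

theorem hyperconvex_restrict_of_exists_isCenterOn (H : Set X)
    (h : ∀ s : Finset X → ℝ, s ∅ = 0 → D.IsAdmissibleOn {A | (A : Set X) ⊆ H} s →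
      ∃ z ∈ H, D.IsCenterOn {A | (A : Set X) ⊆ H} s z) :
    (D.restrict H).Hyperconvex := by
  classical
  intro s hs0 hs
  let s' (C : Finset X) : ℝ := s (C.subtype (· ∈ H))
  have hsub : ∀ B : Finset H, (B.image Subtype.val).subtype (· ∈ H) = B := fun B => by
    ext a; simp
  have hadm : D.IsAdmissibleOn {A | (A : Set X) ⊆ H} s' := by
    intro 𝒞 h𝒞
    have hinj : Set.InjOn (Finset.subtype (· ∈ H)) 𝒞 := fun C₁ h₁ C₂ h₂ he => by
      rw [← Finset.subtype_map_of_mem (h𝒞 C₁ h₁), he, Finset.subtype_map_of_mem (h𝒞 C₂ h₂)]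
    have hsup : ((𝒞.image (Finset.subtype (· ∈ H))).sup id).image Subtype.val = 𝒞.sup id := by
      ext x
      simpa [Finset.mem_sup] using fun C hC hxC => h𝒞 C hC hxC
    calc D.delta (𝒞.sup id)
        = (D.restrict H).delta ((𝒞.image (Finset.subtype (· ∈ H))).sup id) := by
          rw [← hsup]; rfl
      _ ≤ _ := hs _
      _ = ∑ A ∈ 𝒞, s' A := Finset.sum_image hinj
  obtain ⟨z, hzH, hz⟩ := h s' (by simp only [s']; convert hs0; simp [Finset.subtype_eq_empty]) hadm
  refine ⟨⟨z, hzH⟩, fun B => ?_⟩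
  have := hz (B.image Subtype.val) (by simp [Set.image_subset_iff])
  simpa [restrict, s', hsub, Finset.image_insert] using this

end Diversity

theorem hyperconvex_of_center_set_general
    {X : Type*} [DecidableEq X] (D : Diversity X)
    (hH : D.Hyperconvex)
    (Z : Set X) (hZne : Z.Nonempty)
    (r : Finset X → ℝ) (hr0 : r ∅ = 0)
    (hr : ∀ 𝒜 : Finset (Finset X), (∀ A ∈ 𝒜, (A : Set X) ⊆ Z) →
      D.delta (𝒜.sup id) ≤ ∑ A ∈ 𝒜, r A) :
    {x : X | ∀ A : Finset X, (A : Set X) ⊆ Z → D.delta (insert x A) ≤ r A}.Nonempty ∧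
    (D.restrict
      {x : X | ∀ A : Finset X, (A : Set X) ⊆ Z → D.delta (insert x A) ≤ r A}).Hyperconvex := by
  set Y := {x : X | ∀ A : Finset X, (A : Set X) ⊆ Z → D.delta (insert x A) ≤ r A}
  obtain ⟨z₀, hz₀⟩ := hZne
  have hz₀Z : ({z₀} : Finset X) ∈ {A : Finset X | (A : Set X) ⊆ Z} := by simpa using hz₀
  refine ⟨hH.exists_isCenterOn (𝒮 := {A | (A : Set X) ⊆ Z}) (by simp) hr0 hz₀Z hr, ?_⟩
  refine D.hyperconvex_restrict_of_exists_isCenterOn Y fun s hs0 hs => ?_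
  obtain ⟨z, hz⟩ := hH.exists_isCenterOn (𝒮 := {C | (C : Set X) ⊆ Z ∨ (C : Set X) ⊆ Y})
    (Or.inl (by simp)) (Diversity.glue_empty hr0 hs0) (Or.inl hz₀Z)
    (Diversity.isAdmissibleOn_glue hr hs fun _ hy => hy)
  exact ⟨z, fun A hA => (hz A (Or.inl hA)).trans (Diversity.glue_le_left hA),
    fun B hB => (hz B (Or.inr hB)).trans (Diversity.glue_le_right hB)⟩

/-- Let `(X, δ)` be a hyperconvex diversity, `Z ⊆ X` nonempty and
bounded with respect to the induced metric, and let `r` on finite subsets of `Z`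
satisfy `r ∅ = 0` and the hyperconvexity inequality for all finite collections of
finite subsets of `Z`. Then the set
`Y = { x ∈ X : δ(A ∪ {x}) ≤ r(A) for every finite A ⊆ Z }` is nonempty and the
restricted diversity `(Y, δ)` is hyperconvex. -/
theorem hyperconvex_of_center_set
    {X : Type*} [DecidableEq X] (D : Diversity X)
    (hH : D.Hyperconvex)
    (Z : Set X) (hZne : Z.Nonempty)
    (hZbd : ∃ M : ℝ, ∀ y ∈ Z, ∀ z ∈ Z, D.delta {y, z} ≤ M)
    (r : Finset X → ℝ) (hr0 : r ∅ = 0)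
    (hr : ∀ 𝒜 : Finset (Finset X), (∀ A ∈ 𝒜, (A : Set X) ⊆ Z) →
      D.delta (𝒜.sup id) ≤ ∑ A ∈ 𝒜, r A) :
    {x : X | ∀ A : Finset X, (A : Set X) ⊆ Z → D.delta (insert x A) ≤ r A}.Nonempty ∧
    (D.restrict
      {x : X | ∀ A : Finset X, (A : Set X) ⊆ Z → D.delta (insert x A) ≤ r A}).Hyperconvex :=
  hyperconvex_of_center_set_general D hH Z hZne r hr0 hr
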